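/- arXiv:2406.09523 — 2 statements merged into one kernel-verified Lean document; each statement's English description precedes it below -/
import Mathlib

section
/- Let T > 0 and let (f_k)_{k∈ℕ} be a sequence of continuous nonnegative functions f_k : [0,T] → ℝ. Suppose there exists a constant C > 0 such that for all k ≥ 1 and all t ∈ [0,T], f_k(t) ≤ C ∫_t^T (f_k(s) + f_{k-1}(s)) ds. Then f_k converges to the zero function uniformly on [0,T] as k → ∞. -/
open MeasureTheory Filter
open Topology

/-- If continuous nonnegative functions `f k` on `[0,T]` satisfy
`f k t ≤ C ∫_t^T (f k s + f (k-1) s) ds` for all `k ≥ 1`, then `f k → 0`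
uniformly on `[0,T]`. -/
theorem stmt0 (T : ℝ) (hT : 0 < T) (f : ℕ → ℝ → ℝ)
    (hcont : ∀ k, ContinuousOn (f k) (Set.Icc 0 T))
    (hnonneg : ∀ k, ∀ t ∈ Set.Icc (0:ℝ) T, 0 ≤ f k t)
    (C : ℝ) (hC : 0 < C)
    (hineq : ∀ k, 1 ≤ k → ∀ t ∈ Set.Icc (0:ℝ) T,
      f k t ≤ C * ∫ s in t..T, (f k s + f (k - 1) s)) :
    TendstoUniformlyOn f 0 atTop (Set.Icc 0 T) := by
  set w : ℕ → ℝ → ℝ := fun k t => f k t * Real.exp (3 * C * (t - T)) with hw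
  have hwcont : ∀ k, ContinuousOn (w k) (Set.Icc 0 T) := fun k =>
    (hcont k).mul (Real.continuous_exp.comp (by continuity)).continuousOn
  set N : ℕ → ℝ := fun k => sSup (w k '' Set.Icc 0 T) with hNdef
  have hbdd : ∀ k, BddAbove (w k '' Set.Icc 0 T) := fun k =>
    (isCompact_Icc.image_of_continuousOn (hwcont k)).bddAbove
  have hne : ∀ k, (w k '' Set.Icc 0 T).Nonempty := fun k =>
    ⟨w k 0, Set.mem_image_of_mem _ (Set.mem_Icc.2 ⟨le_rfl, hT.le⟩)⟩
  have hwle : ∀ k, ∀ t ∈ Set.Icc (0:ℝ) T, w k t ≤ N k := fun k t ht =>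
    le_csSup (hbdd k) (Set.mem_image_of_mem _ ht)
  have hN0 : ∀ k, 0 ≤ N k := by
    intro k
    refine le_trans ?_ (hwle k 0 (Set.mem_Icc.2 ⟨le_rfl, hT.le⟩))
    exact mul_nonneg (hnonneg k 0 (Set.mem_Icc.2 ⟨le_rfl, hT.le⟩)) (Real.exp_pos _).le
  -- pointwise bound from N
  have hfb : ∀ k, ∀ s ∈ Set.Icc (0:ℝ) T, f k s ≤ N k * Real.exp (3 * C * (T - s)) := by
    intro k s hs
    have h1 := hwle k s hs
    have h2 : f k s = w k s * Real.exp (3 * C * (T - s)) := by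
      rw [hw]; simp only [mul_assoc, ← Real.exp_add]
      ring_nf
      simp
    rw [h2]
    exact mul_le_mul_of_nonneg_right h1 (Real.exp_pos _).le
  -- integrability
  have hfint : ∀ k, ∀ t ∈ Set.Icc (0:ℝ) T, IntervalIntegrable (f k) volume t T := by
    intro k t ht
    apply ContinuousOn.intervalIntegrable
    apply (hcont k).mono
    rw [Set.uIcc_of_le ht.2]
    exact Set.Icc_subset_Icc ht.1 le_rfl
  -- key: N k ≤ (N k + N (k-1)) / 3
  have hkey : ∀ k, 1 ≤ k → N k ≤ (N k + N (k - 1)) / 3 := by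
    intro k hk
    apply csSup_le (hne k)
    rintro x ⟨t, ht, rfl⟩
    have hIb : (∫ s in t..T, (f k s + f (k-1) s)) ≤
        (N k + N (k-1)) * ((Real.exp (3 * C * (T - t)) - 1) / (3 * C)) := by
      have hmono : (∫ s in t..T, (f k s + f (k-1) s)) ≤
          ∫ s in t..T, (N k + N (k-1)) * Real.exp (3 * C * (T - s)) := by
        apply intervalIntegral.integral_mono_on ht.2
        · exact (hfint k t ht).add (hfint (k-1) t ht)
        · apply ContinuousOn.intervalIntegrable
          exact (continuous_const.mul (Real.continuous_exp.comp (by continuity))).continuousOn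
        · intro s hs
          have hs' : s ∈ Set.Icc (0:ℝ) T := ⟨le_trans ht.1 hs.1, hs.2⟩
          have := hfb k s hs'
          have := hfb (k-1) s hs'
          nlinarith
      calc (∫ s in t..T, (f k s + f (k-1) s)) ≤ _ := hmono
        _ = (N k + N (k-1)) * ∫ s in t..T, Real.exp (3 * C * (T - s)) := by
            rw [intervalIntegral.integral_const_mul]
        _ = (N k + N (k-1)) * ((Real.exp (3 * C * (T - t)) - 1) / (3 * C)) := by
            congr 1
            rw [intervalIntegral.integral_comp_sub_left (fun x => Real.exp (3 * C * x)) T]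
            rw [intervalIntegral.integral_comp_mul_left (fun x => Real.exp x)
              (by positivity : (3:ℝ) * C ≠ 0)]
            simp [integral_exp, mul_comm]
            field_simp
    have hNN : 0 ≤ N k + N (k-1) := by have := hN0 k; have := hN0 (k-1); linarith
    have h3 : f k t ≤ (N k + N (k-1)) / 3 * Real.exp (3 * C * (T - t)) := by
      have h4 := hineq k hk t ht
      have h5 : C * (∫ s in t..T, (f k s + f (k-1) s)) ≤
          C * ((N k + N (k-1)) * ((Real.exp (3 * C * (T - t)) - 1) / (3 * C))) :=
        mul_le_mul_of_nonneg_left hIb hC.le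
      have h6 : C * ((N k + N (k-1)) * ((Real.exp (3 * C * (T - t)) - 1) / (3 * C)))
          = (N k + N (k-1)) / 3 * (Real.exp (3 * C * (T - t)) - 1) := by
        field_simp
      have h7 : (N k + N (k-1)) / 3 * (Real.exp (3 * C * (T - t)) - 1) ≤
          (N k + N (k-1)) / 3 * Real.exp (3 * C * (T - t)) := by nlinarith
      linarith
    -- conclude w k t ≤ (N k + N (k-1))/3
    have h8 : w k t = f k t * Real.exp (3 * C * (t - T)) := rfl
    rw [h8]
    calc f k t * Real.exp (3 * C * (t - T))
        ≤ (N k + N (k-1)) / 3 * Real.exp (3 * C * (T - t)) * Real.exp (3 * C * (t - T)) :=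
          mul_le_mul_of_nonneg_right h3 (Real.exp_pos _).le
      _ = (N k + N (k-1)) / 3 := by
          rw [mul_assoc, ← Real.exp_add]
          ring_nf
          simp
  have hhalf : ∀ k, 1 ≤ k → N k ≤ N (k - 1) / 2 := by
    intro k hk
    have := hkey k hk
    linarith
  have hgeo : ∀ k, N k ≤ (1/2 : ℝ)^k * N 0 := by
    intro k
    induction k with
    | zero => simp
    | succ n ih =>
      have h1 := hhalf (n+1) (by omega)
      simp only [Nat.add_sub_cancel] at h1
      have : N (n+1) ≤ ((1/2:ℝ)^n * N 0) / 2 := by linarith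
      calc N (n+1) ≤ ((1/2:ℝ)^n * N 0) / 2 := this
        _ = (1/2:ℝ)^(n+1) * N 0 := by ring
  -- final uniform bound
  rw [Metric.tendstoUniformlyOn_iff]
  intro ε hε
  have htend : Tendsto (fun k => (1/2 : ℝ)^k * N 0 * Real.exp (3 * C * T)) atTop (𝓝 0) := by
    have h := tendsto_pow_atTop_nhds_zero_of_lt_one (by norm_num : (0:ℝ) ≤ 1/2)
      (by norm_num : (1/2:ℝ) < 1)
    simpa using (h.mul_const (N 0)).mul_const (Real.exp (3 * C * T))
  filter_upwards [htend.eventually (gt_mem_nhds hε)] with k hk t ht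
  have h1 : f k t ≤ N k * Real.exp (3 * C * (T - t)) := hfb k t ht
  have h2 : Real.exp (3 * C * (T - t)) ≤ Real.exp (3 * C * T) := by
    apply Real.exp_le_exp.2
    nlinarith [ht.1]
  have h3 : N k * Real.exp (3 * C * (T - t)) ≤ (1/2:ℝ)^k * N 0 * Real.exp (3 * C * T) := by
    have := hgeo k
    have := hN0 k
    nlinarith [Real.exp_pos (3 * C * (T - t)), Real.exp_pos (3 * C * T)]
  have hfnn := hnonneg k t ht
  simp only [Pi.zero_apply, Real.dist_eq, zero_sub, abs_neg, abs_of_nonneg hfnn]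
  linarith
end

section
/- Let A_1, …, A_N be symmetric positive semidefinite N×N real matrices and let e_1, …, e_N be the standard basis vectors of ℝ^N. Then ‖∑_{i=1}^N e_i e_iᵀ A_i‖ ≤ ‖∑_{i=1}^N A_i‖, where ‖·‖ denotes the matrix operator 2-norm. -/
/-!
Write `S = ∑ Aᵢ`. Row `i` of `∑ eᵢeᵢᵀAᵢ` is row `i` of `Aᵢ`, so its bilinear form is
`yᵀ(∑ eᵢeᵢᵀAᵢ)x = ∑ yᵢ (Aᵢx)ᵢ`. Cauchy–Schwarz for the semi-inner product `⟨u, Aᵢv⟩` gives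
`(Aᵢx)ᵢ² ≤ (Aᵢ)ᵢᵢ · xᵀAᵢx`, and Cauchy–Schwarz for finite sums then gives
`(yᵀ(∑ eᵢeᵢᵀAᵢ)x)² ≤ (∑ yᵢ² (Aᵢ)ᵢᵢ)(∑ xᵀAᵢx) ≤ (∑ yᵢ² Sᵢᵢ)(xᵀSx)`.
For unit vectors both factors are at most `‖S‖`, because the diagonal entries and the quadratic
form of `S` on the unit sphere are bounded by its operator norm.
-/

open scoped Matrix

/-- The operator (spectral) 2-norm of a real square matrix. -/
noncomputable def opNorm {N : ℕ} (M : Matrix (Fin N) (Fin N) ℝ) : ℝ :=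
  ‖Matrix.toEuclideanCLM (𝕜 := ℝ) M‖

namespace Matrix

variable {n : Type*} [Fintype n] [DecidableEq n]

theorem PosSemidef.dotProduct_mulVec_sq_le {A : Matrix n n ℝ} (hA : A.PosSemidef)
    (u v : n → ℝ) : (u ⬝ᵥ A *ᵥ v) ^ 2 ≤ (u ⬝ᵥ A *ᵥ u) * (v ⬝ᵥ A *ᵥ v) := by
  have hsymm : LinearMap.IsSymm (toBilin' A) := LinearMap.BilinForm.isSymm_iff.mp <|
    isSymm_toBilin'_iff_isSymm.mpr (isHermitian_iff_isSymm.mp hA.isHermitian)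
  simpa only [toBilin'_apply'] using (toBilin' A).apply_sq_le_of_symm
    (fun x ↦ by simpa [toBilin'_apply'] using hA.dotProduct_mulVec_nonneg x) hsymm u v

theorem PosSemidef.mulVec_apply_sq_le {A : Matrix n n ℝ} (hA : A.PosSemidef)
    (i : n) (v : n → ℝ) : (A *ᵥ v) i ^ 2 ≤ A i i * (v ⬝ᵥ A *ᵥ v) := by
  simpa [single_one_dotProduct, mulVec_single_one] using
    hA.dotProduct_mulVec_sq_le (Pi.single i 1) v

theorem dotProduct_sum_single_mul_mulVec {α : Type*} [CommSemiring α]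
    (A : n → Matrix n n α) (u v : n → α) :
    u ⬝ᵥ (∑ i, single i i 1 * A i) *ᵥ v = ∑ i, u i * (A i *ᵥ v) i := by
  simp only [sum_mulVec, ← mulVec_mulVec, single_mulVec_eq, dotProduct_sum, dotProduct_smul,
    dotProduct_single_one, mul_one, smul_eq_mul, mul_comm]

theorem dotProduct_mulVec_le_norm_toEuclideanCLM (B : Matrix n n ℝ) (x : EuclideanSpace ℝ n) :
    x ⬝ᵥ B *ᵥ x ≤ ‖toEuclideanCLM (𝕜 := ℝ) B‖ * ‖x‖ ^ 2 := by
  rw [← inner_toEuclideanCLM]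
  calc _ ≤ ‖x‖ * ‖toEuclideanCLM (𝕜 := ℝ) B x‖ := real_inner_le_norm _ _
    _ ≤ ‖x‖ * (‖toEuclideanCLM (𝕜 := ℝ) B‖ * ‖x‖) :=
        mul_le_mul_of_nonneg_left (ContinuousLinearMap.le_opNorm _ _) (norm_nonneg _)
    _ = _ := by ring

theorem diag_le_norm_toEuclideanCLM (B : Matrix n n ℝ) (i : n) :
    B i i ≤ ‖toEuclideanCLM (𝕜 := ℝ) B‖ := by
  simpa [single_one_dotProduct, mulVec_single_one] using
    dotProduct_mulVec_le_norm_toEuclideanCLM B (EuclideanSpace.single i 1)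

theorem sum_sq_mul_diag_le_norm_toEuclideanCLM (B : Matrix n n ℝ) (x : EuclideanSpace ℝ n) :
    ∑ i, x i ^ 2 * B i i ≤ ‖toEuclideanCLM (𝕜 := ℝ) B‖ * ‖x‖ ^ 2 := by
  rw [EuclideanSpace.real_norm_sq_eq, Finset.mul_sum]
  refine Finset.sum_le_sum fun i _ ↦ ?_
  rw [mul_comm]
  exact mul_le_mul_of_nonneg_right (diag_le_norm_toEuclideanCLM B i) (sq_nonneg _)

theorem sq_dotProduct_sum_single_mul_mulVec_le {A : n → Matrix n n ℝ}
    (hA : ∀ i, (A i).PosSemidef) (u v : n → ℝ) :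
    (u ⬝ᵥ (∑ i, single i i 1 * A i) *ᵥ v) ^ 2 ≤
      (∑ i, u i ^ 2 * (∑ j, A j) i i) * (v ⬝ᵥ (∑ j, A j) *ᵥ v) := by
  have hquad : v ⬝ᵥ (∑ j, A j) *ᵥ v = ∑ j, v ⬝ᵥ A j *ᵥ v := by
    rw [sum_mulVec, dotProduct_sum]
  have hdiag (i : n) : A i i i ≤ (∑ j, A j) i i := by
    simp only [sum_apply]
    exact Finset.single_le_sum (fun j _ ↦ (hA j).diag_nonneg) (Finset.mem_univ i)
  rw [dotProduct_sum_single_mul_mulVec, hquad]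
  calc _ ≤ (∑ i, u i ^ 2 * A i i i) * ∑ j, v ⬝ᵥ A j *ᵥ v :=
        Finset.sum_sq_le_sum_mul_sum_of_sq_le_mul _
          (fun i _ ↦ mul_nonneg (sq_nonneg _) (hA i).diag_nonneg)
          (fun j _ ↦ (hA j).dotProduct_mulVec_nonneg v) fun i _ ↦ by
            rw [mul_pow, mul_assoc]
            exact mul_le_mul_of_nonneg_left ((hA i).mulVec_apply_sq_le i v) (sq_nonneg _)
    _ ≤ _ := by
        gcongr with i
        · exact Finset.sum_nonneg fun j _ ↦ (hA j).dotProduct_mulVec_nonneg v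
        · exact hdiag i

end Matrix

open Matrix

/-- For symmetric PSD matrices `A i`, `‖∑ eᵢeᵢᵀ Aᵢ‖ ≤ ‖∑ Aᵢ‖` in operator 2-norm. -/
theorem stmt1 {N : ℕ} (A : Fin N → Matrix (Fin N) (Fin N) ℝ)
    (hA : ∀ i, (A i).PosSemidef) :
    opNorm (∑ i, Matrix.single i i (1:ℝ) * A i) ≤ opNorm (∑ i, A i) := by
  set S := ∑ i, A i
  refine ContinuousLinearMap.opNorm_le_of_re_inner_le (norm_nonneg _) fun x y hx hy ↦ ?_
  rw [RCLike.re_to_real, real_inner_comm, inner_toEuclideanCLM]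
  have hdiag : ∑ i, y i ^ 2 * S i i ≤ opNorm S := by
    simpa [opNorm, hy] using sum_sq_mul_diag_le_norm_toEuclideanCLM S y
  have hquad : x ⬝ᵥ S *ᵥ x ≤ opNorm S := by
    simpa [opNorm, hx] using dotProduct_mulVec_le_norm_toEuclideanCLM S x
  refine le_of_abs_le (abs_le_of_sq_le_sq ?_ (norm_nonneg _))
  calc _ ≤ _ := sq_dotProduct_sum_single_mul_mulVec_le hA y x
    _ ≤ opNorm S * opNorm S := mul_le_mul hdiag hquad
        ((posSemidef_sum Finset.univ fun i _ ↦ hA i).dotProduct_mulVec_nonneg x) (norm_nonneg _)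
    _ = _ := (sq _).symm
end
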